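/- Let (a_k)_{k≥0} be a sequence of nonnegative real numbers, let c be a real number with 0 < c ≤ a₀, and suppose that for every k ≥ 1 one has a_k ≤ (1/2)·a_{k−1} + 8.22·c. Set k* = ⌈log₂(a₀/c)⌉. Let δ and e be real numbers with 0 ≤ δ ≤ 0.139 and e ≤ (1/(1−δ))·a_{k*} + (1/(1−δ))·c. Then e ≤ (18.44/0.861)·c. -/
import Mathlib


theorem stmt_4 (a : ℕ → ℝ) (c : ℝ) (ha : ∀ k, 0 ≤ a k) (hc : 0 < c)
    (hca : c ≤ a 0)
    (hrec : ∀ k, 1 ≤ k → a k ≤ (1/2) * a (k-1) + 8.22 * c)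
    (δ e : ℝ) (hδ0 : 0 ≤ δ) (hδ : δ ≤ 0.139)
    (he : e ≤ (1/(1-δ)) * a ⌈Real.logb 2 (a 0 / c)⌉₊ + (1/(1-δ)) * c) :
    e ≤ (18.44/0.861) * c := by
  set k : ℕ := ⌈Real.logb 2 (a 0 / c)⌉₊ with hk
  -- geometric bound
  have hgeo : ∀ n, a n ≤ (1/2)^n * a 0 + 16.44 * c := by
    intro n
    induction n with
    | zero => simp; nlinarith
    | succ m ih =>
      have h := hrec (m+1) (by omega)
      simp only [Nat.add_sub_cancel] at h
      have : (1/2 : ℝ) * a m ≤ (1/2) * ((1/2)^m * a 0 + 16.44 * c) := by linarith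
      calc a (m+1) ≤ (1/2) * a m + 8.22 * c := h
        _ ≤ (1/2) * ((1/2)^m * a 0 + 16.44 * c) + 8.22 * c := by linarith
        _ = (1/2)^(m+1) * a 0 + 16.44 * c := by ring
  -- 2^k ≥ a0/c
  have hx : (0:ℝ) < a 0 / c := div_pos (lt_of_lt_of_le hc hca) hc
  have h1 : a 0 / c ≤ 2 ^ k := by
    have : a 0 / c = (2:ℝ) ^ (Real.logb 2 (a 0 / c)) :=
      (Real.rpow_logb (by norm_num) (by norm_num) hx).symm
    rw [this]
    have hle : Real.logb 2 (a 0 / c) ≤ (k : ℝ) := Nat.le_ceil _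
    calc (2:ℝ) ^ (Real.logb 2 (a 0 / c)) ≤ (2:ℝ) ^ (k:ℝ) :=
          Real.rpow_le_rpow_of_exponent_le (by norm_num) hle
      _ = 2 ^ k := by rw [Real.rpow_natCast]
  have h2 : (1/2:ℝ)^k * a 0 ≤ c := by
    have hpow : (0:ℝ) < (2:ℝ)^k := by positivity
    have : a 0 ≤ c * 2^k := by
      rw [div_le_iff₀ hc] at h1; linarith [h1]
    rw [div_pow, one_pow, div_mul_eq_mul_div, div_le_iff₀ hpow]
    linarith
  have hak : a k ≤ 17.44 * c := by
    have := hgeo k; linarith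
  -- final
  have hδ1 : (0:ℝ) < 1 - δ := by linarith
  have hinv : 1/(1-δ) ≤ 1/0.861 := by
    apply one_div_le_one_div_of_le (by norm_num) (by linarith)
  have hsum : a k + c ≤ 18.44 * c := by linarith
  have hpos : (0:ℝ) ≤ a k + c := by linarith [ha k, hc.le]
  calc e ≤ (1/(1-δ)) * (a k + c) := by linarith [he]
    _ ≤ (1/0.861) * (18.44 * c) := by
        apply mul_le_mul hinv hsum hpos (by norm_num)
    _ = (18.44/0.861) * c := by ring
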